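/- Under the bijection (α, β) ↦ (M, V) = (α/(α+β), αβ/((α+β)²(α+β+1))), the region α > 1 and β > 1 is mapped exactly onto {(M,V) : M ∈ (0,1), V < min(M²(1-M)/(1+M), M(1-M)²/(2-M))}. -/

import Mathlib

/-!
Parametrise `(α, β) = (M s, (1 - M) s)` with `M ∈ (0, 1)` and `s = α + β > 0`. Then
`toMV (α, β) = (M, M (1 - M) / (s + 1))`, so for fixed `M` the variance is a decreasing bijection
of `s + 1 ∈ (0, ∞)` onto `(0, M (1 - M))`, and the two constraints `α > 1`, `β > 1` become
`V < C₁ M` and `V < C₂ M` respectively.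
-/

noncomputable def toMV (p : ℝ × ℝ) : ℝ × ℝ :=
  (p.1 / (p.1 + p.2), p.1 * p.2 / ((p.1 + p.2) ^ 2 * (p.1 + p.2 + 1)))

noncomputable def C₁ (M : ℝ) : ℝ := M ^ 2 * (1 - M) / (1 + M)
noncomputable def C₂ (M : ℝ) : ℝ := M * (1 - M) ^ 2 / (2 - M)

open Set

lemma exists_eq_mul_and_eq_one_sub_mul {a b : ℝ} (ha : 0 < a) (hb : 0 < b) :
    ∃ M ∈ Ioo (0 : ℝ) 1, ∃ s > 0, a = M * s ∧ b = (1 - M) * s := by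
  have hs : 0 < a + b := add_pos ha hb
  refine ⟨a / (a + b), ⟨by positivity, (div_lt_one hs).2 (by linarith)⟩, a + b, hs, ?_, ?_⟩
  · field_simp
  · field_simp
    ring

lemma toMV_mul_one_sub_mul {M s : ℝ} (hs : s ≠ 0) (hs₁ : s + 1 ≠ 0) :
    toMV (M * s, (1 - M) * s) = (M, M * (1 - M) / (s + 1)) := by
  have hsum : M * s + (1 - M) * s = s := by ring
  simp only [toMV, hsum, Prod.mk.injEq]
  constructor
  · field_simp
  · field_simp

lemma lt_C₁_iff {M s : ℝ} (hM : M ∈ Ioo (0 : ℝ) 1) (hs₁ : 0 < s + 1) :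
    M * (1 - M) / (s + 1) < C₁ M ↔ 1 < M * s := by
  obtain ⟨hM₀, hM₁⟩ := hM
  have hM' : 0 < M * (1 - M) := mul_pos hM₀ (by linarith)
  rw [C₁, div_lt_div_iff₀ hs₁ (by linarith)]
  constructor <;> intro h <;> nlinarith

lemma lt_C₂_iff {M s : ℝ} (hM : M ∈ Ioo (0 : ℝ) 1) (hs₁ : 0 < s + 1) :
    M * (1 - M) / (s + 1) < C₂ M ↔ 1 < (1 - M) * s := by
  obtain ⟨hM₀, hM₁⟩ := hM
  have hM' : 0 < M * (1 - M) := mul_pos hM₀ (by linarith)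
  rw [C₂, div_lt_div_iff₀ hs₁ (by linarith)]
  constructor <;> intro h <;> nlinarith

theorem image_arched :
    toMV '' (Set.Ioi (1:ℝ) ×ˢ Set.Ioi (1:ℝ)) =
      {q : ℝ × ℝ | q.1 ∈ Set.Ioo (0:ℝ) 1 ∧ 0 < q.2 ∧ q.2 < min (C₁ q.1) (C₂ q.1)} := by
  ext ⟨M, V⟩
  simp only [mem_image, mem_prod, mem_Ioi, mem_ofPred_eq, lt_min_iff]
  constructor
  · rintro ⟨⟨a, b⟩, ⟨ha, hb⟩, hab⟩
    obtain ⟨M', hM', s, hs, rfl, rfl⟩ :=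
      exists_eq_mul_and_eq_one_sub_mul (zero_lt_one.trans ha) (zero_lt_one.trans hb)
    have hs₁ : 0 < s + 1 := by positivity
    rw [toMV_mul_one_sub_mul hs.ne' hs₁.ne', Prod.mk.injEq] at hab
    obtain ⟨rfl, rfl⟩ := hab
    exact ⟨hM', div_pos (mul_pos hM'.1 (sub_pos.2 hM'.2)) hs₁,
      (lt_C₁_iff hM' hs₁).2 ha, (lt_C₂_iff hM' hs₁).2 hb⟩
  · rintro ⟨hM, hV, hV₁, hV₂⟩
    have hMM : 0 < M * (1 - M) := mul_pos hM.1 (sub_pos.2 hM.2)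
    set s := M * (1 - M) / V - 1
    have hs₁ : 0 < s + 1 := by simp only [s, sub_add_cancel]; positivity
    have hVs : V = M * (1 - M) / (s + 1) := by
      simp only [s, sub_add_cancel]
      exact (div_div_cancel₀ hMM.ne').symm
    rw [hVs] at hV₁ hV₂
    have ha := (lt_C₁_iff hM hs₁).1 hV₁
    have hs : 0 < s := pos_of_mul_pos_right (zero_lt_one.trans ha) hM.1.le
    exact ⟨(M * s, (1 - M) * s), ⟨ha, (lt_C₂_iff hM hs₁).1 hV₂⟩,
      by rw [toMV_mul_one_sub_mul hs.ne' hs₁.ne', ← hVs]⟩
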